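/- Fix a ∈ (0, 1/2) and let C_a = {(1−a)·Σ_{j=0}^∞ ε_j a^j : ε_j ∈ {0,1} for all j} ⊂ ℝ. If k is a positive integer with k ≥ (1−a)/a, then for every nonempty compact set E ⊂ ℝ, the lower Minkowski dimension satisfies dim_m(C_a + E) ≥ 1/k + ((k−1)/k)·dim_m(E). -/

import Mathlib

open Filter Set Pointwise

/-- The minimal number of intervals of length `δ` needed to cover `A ⊆ ℝ`. -/
noncomputable def coverNumber (A : Set ℝ) (δ : ℝ) : ℕ :=
  sInf {N : ℕ | ∃ C : Finset ℝ, C.card = N ∧ A ⊆ ⋃ x ∈ C, Set.Icc x (x + δ)}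

/-- The lower Minkowski dimension of a set `A ⊆ ℝ`: the liminf as `δ → 0⁺` of
`log N(A, δ) / log (1/δ)`. -/
noncomputable def lowerMinkDim (A : Set ℝ) : ℝ :=
  liminf (fun δ : ℝ => Real.log (coverNumber A δ) / Real.log (1 / δ)) (nhdsWithin 0 (Set.Ioi 0))

/-- The homogeneous Cantor set `C_a = {(1-a) ∑ εⱼ aʲ : εⱼ ∈ {0,1}}`. -/
def homCantor (a : ℝ) : Set ℝ :=
  {x | ∃ ε : ℕ → ℝ, (∀ j, ε j = 0 ∨ ε j = 1) ∧ x = (1 - a) * ∑' j : ℕ, ε j * a ^ j}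

/-! Cut the line into cells `[mδ, (m + 1)δ)` and let `S, T ⊆ ℤ` be the sets of cells met by `E`
and by `C_a`. Then `#S ≥ N(E, δ)` and `#(S + T) ≤ 3 N(C_a + E, δ)`. Since `k ≥ (1 - a) / a`, a
greedy base-`a` expansion with digits `0, …, k` shows that `k • C_a` is dense in `[0, k]`, so
`k • T` has at least about `1 / δ` elements. The Plünnecke–Ruzsa inequality
`#(k • T) · #S ^ (k - 1) ≤ #(S + T) ^ k` thus gives `N(E, δ) ^ (k - 1) ≲ δ · N(C_a + E, δ) ^ k`;
take logarithms, divide by `k log (1 / δ)` and pass to the liminf as `δ → 0`. -/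

open Topology Bornology

section CoverNumber

variable {A : Set ℝ} {δ : ℝ}

lemma coverNumber_le_card {C : Finset ℝ} (h : A ⊆ ⋃ x ∈ C, Icc x (x + δ)) :
    coverNumber A δ ≤ C.card :=
  Nat.sInf_le ⟨C, rfl, h⟩

lemma Icc_subset_biUnion_Icc {l u : ℝ} (hδ : 0 < δ) :
    Icc l u ⊆ ⋃ x ∈ (Finset.range (⌊(u - l) / δ⌋₊ + 1)).image (fun i : ℕ => l + i * δ),
      Icc x (x + δ) := by
  rintro x ⟨hlx, hxu⟩
  set i := ⌊(x - l) / δ⌋₊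
  have hi : i * δ ≤ x - l := (le_div_iff₀ hδ).mp (Nat.floor_le (by positivity))
  have hi' : x - l < (i + 1) * δ := (div_lt_iff₀ hδ).mp (Nat.lt_floor_add_one _)
  have hiu : i ≤ ⌊(u - l) / δ⌋₊ := Nat.floor_le_floor (by gcongr)
  refine mem_iUnion₂.mpr ⟨l + i * δ, ?_, by linarith, by linarith⟩
  exact Finset.mem_image.mpr ⟨i, Finset.mem_range.mpr (by omega), rfl⟩

lemma coverNumber_le_floor_add_one {l u : ℝ} (hA : A ⊆ Icc l u) (hδ : 0 < δ) :
    coverNumber A δ ≤ ⌊(u - l) / δ⌋₊ + 1 :=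
  (coverNumber_le_card (hA.trans (Icc_subset_biUnion_Icc hδ))).trans
    (Finset.card_image_le.trans (Finset.card_range _).le)

lemma exists_finset_card_eq_coverNumber (hA : IsBounded A) (hδ : 0 < δ) :
    ∃ C : Finset ℝ, C.card = coverNumber A δ ∧ A ⊆ ⋃ x ∈ C, Icc x (x + δ) :=
  Nat.sInf_mem (s := {N | ∃ C : Finset ℝ, C.card = N ∧ A ⊆ ⋃ x ∈ C, Icc x (x + δ)})
    ⟨_, _, rfl, hA.subset_Icc_sInf_sSup.trans (Icc_subset_biUnion_Icc hδ)⟩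

lemma one_le_coverNumber (hA : IsBounded A) (hne : A.Nonempty) (hδ : 0 < δ) :
    1 ≤ coverNumber A δ := by
  obtain ⟨C, hC, hAC⟩ := exists_finset_card_eq_coverNumber hA hδ
  obtain ⟨x, hx⟩ := hne
  obtain ⟨c, hc, -⟩ := mem_iUnion₂.mp (hAC hx)
  rw [← hC]
  exact Finset.card_pos.mpr ⟨c, hc⟩

lemma finite_image_floor_div (hA : IsBounded A) (hδ : 0 < δ) :
    ((fun x => ⌊x / δ⌋) '' A).Finite := by
  refine (finite_Icc ⌊sInf A / δ⌋ ⌊sSup A / δ⌋).subset ?_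
  rintro _ ⟨x, hx, rfl⟩
  have hx' := hA.subset_Icc_sInf_sSup hx
  exact ⟨Int.floor_le_floor (by gcongr; exact hx'.1), Int.floor_le_floor (by gcongr; exact hx'.2)⟩

lemma coverNumber_le_card_of_image_floor_subset {S : Finset ℤ} (hδ : 0 < δ)
    (hS : (fun x => ⌊x / δ⌋) '' A ⊆ S) : coverNumber A δ ≤ S.card := by
  refine (coverNumber_le_card (C := S.image (fun m : ℤ => m * δ)) ?_).trans Finset.card_image_le
  intro x hx
  have hm : (⌊x / δ⌋ : ℝ) * δ ≤ x := (le_div_iff₀ hδ).mp (Int.floor_le _)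
  have hm' : x < (⌊x / δ⌋ + 1) * δ := (div_lt_iff₀ hδ).mp (Int.lt_floor_add_one _)
  exact mem_iUnion₂.mpr ⟨_, Finset.mem_image_of_mem _ (hS (mem_image_of_mem _ hx)),
    hm, by linarith⟩

end CoverNumber

section Discretization

lemma Int.floor_add_floor_mem_Icc {u v w : ℝ} (hw : w ≤ u + v) (hw' : u + v ≤ w + 1) :
    ⌊u⌋ + ⌊v⌋ ∈ Icc (⌊w⌋ - 1) (⌊w⌋ + 1) := by
  have hlo : (⌊w⌋ : ℝ) - 2 < ⌊u⌋ + ⌊v⌋ := by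
    linarith [Int.floor_le w, Int.lt_floor_add_one u, Int.lt_floor_add_one v]
  have hhi : (⌊u⌋ + ⌊v⌋ : ℝ) < ⌊w⌋ + 2 := by
    linarith [Int.lt_floor_add_one w, Int.floor_le u, Int.floor_le v]
  have hlo' : ⌊w⌋ - 2 < ⌊u⌋ + ⌊v⌋ := by exact_mod_cast hlo
  have hhi' : ⌊u⌋ + ⌊v⌋ < ⌊w⌋ + 2 := by exact_mod_cast hhi
  exact ⟨by omega, by omega⟩

lemma card_add_le_three_mul_coverNumber {A B : Set ℝ} {δ : ℝ} (hAB : IsBounded (A + B))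
    (hδ : 0 < δ) {S T : Finset ℤ} (hS : (S : Set ℤ) ⊆ (fun x => ⌊x / δ⌋) '' A)
    (hT : (T : Set ℤ) ⊆ (fun x => ⌊x / δ⌋) '' B) :
    (S + T).card ≤ 3 * coverNumber (A + B) δ := by
  obtain ⟨C, hC, hcov⟩ := exists_finset_card_eq_coverNumber hAB hδ
  have hsub : S + T ⊆ C.biUnion fun x => Finset.Icc (⌊x / δ⌋ - 1) (⌊x / δ⌋ + 1) := by
    intro z hz
    obtain ⟨_, hs, _, ht, rfl⟩ := Finset.mem_add.mp hz
    obtain ⟨p, hp, rfl⟩ := hS hs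
    obtain ⟨q, hq, rfl⟩ := hT ht
    obtain ⟨x, hx, hxpq, hpqx⟩ := mem_iUnion₂.mp (hcov (add_mem_add hp hq))
    have hlo : x / δ ≤ p / δ + q / δ := by rw [← add_div]; gcongr
    have hhi : p / δ + q / δ ≤ x / δ + 1 := by
      rw [← add_div, div_add_one hδ.ne']; gcongr
    exact Finset.mem_biUnion.mpr
      ⟨x, hx, Finset.mem_Icc.mpr (Int.floor_add_floor_mem_Icc hlo hhi)⟩
  calc (S + T).card ≤ _ := Finset.card_le_card hsub
    _ ≤ ∑ x ∈ C, (Finset.Icc (⌊x / δ⌋ - 1) (⌊x / δ⌋ + 1)).card := Finset.card_biUnion_le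
    _ = 3 * coverNumber (A + B) δ := by
      simp only [Int.card_Icc, show ∀ m : ℤ, m + 1 + 1 - (m - 1) = 3 by intro m; ring]
      simp [hC, mul_comm]

lemma Finset.card_nsmul_mul_card_pow_le {G : Type*} [AddCommGroup G] [DecidableEq G]
    {A : Finset G} (hA : A.Nonempty) (B : Finset G) (k : ℕ) :
    (k • B).card * A.card ^ (k - 1) ≤ (A + B).card ^ k := by
  rcases k with _ | k
  · simp
  have hA0 : (A.card : ℚ≥0) ≠ 0 := by simp [hA.ne_empty]
  have key : ((k + 1) • B).card * (A.card : ℚ≥0) ^ k ≤ (A + B).card ^ (k + 1) :=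
    calc ((k + 1) • B).card * (A.card : ℚ≥0) ^ k
        ≤ ((A + B).card / A.card : ℚ≥0) ^ (k + 1) * A.card * A.card ^ k := by
          gcongr; exact pluennecke_ruzsa_inequality_nsmul_add hA B (k + 1)
      _ = (A + B).card ^ (k + 1) := by
        rw [div_pow, mul_assoc, ← pow_succ', div_mul_cancel₀ _ (pow_ne_zero _ hA0)]
  exact_mod_cast key

lemma exists_mem_nsmul_image_floor_near {A : Set ℝ} (δ : ℝ) {k : ℕ} {y : ℝ} (hy : y ∈ k • A) :
    ∃ z ∈ k • ((fun x => ⌊x / δ⌋) '' A), |y / δ - z| ≤ k := by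
  obtain ⟨f, hf, rfl⟩ := mem_nsmul_iff_sum.mp hy
  refine ⟨∑ i, ⌊f i / δ⌋, mem_nsmul_iff_sum.mpr ⟨_, fun i => mem_image_of_mem _ (hf i), rfl⟩, ?_⟩
  have hfract : (∑ i, f i) / δ - ((∑ i, ⌊f i / δ⌋ : ℤ) : ℝ) = ∑ i, Int.fract (f i / δ) := by
    push_cast
    rw [Finset.sum_div, ← Finset.sum_sub_distrib]
    rfl
  rw [hfract, abs_of_nonneg (Finset.sum_nonneg fun i _ => Int.fract_nonneg _)]
  calc ∑ i, Int.fract (f i / δ) ≤ ∑ _i : Fin k, (1 : ℝ) :=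
        Finset.sum_le_sum fun i _ => (Int.fract_lt_one _).le
    _ = k := by simp

lemma add_one_le_card_mul_of_forall_exists_near {Z : Finset ℤ} {T W : ℕ}
    (h : ∀ j ≤ T, ∃ z ∈ Z, |(j : ℤ) - z| ≤ W) : T + 1 ≤ Z.card * (2 * W + 1) := by
  have hsub : (Finset.range (T + 1)).image (fun j : ℕ => (j : ℤ)) ⊆
      Z.biUnion fun z => Finset.Icc (z - W) (z + W) := by
    intro _ hmem
    obtain ⟨j, hj, rfl⟩ := Finset.mem_image.mp hmem
    obtain ⟨z, hz, hjz⟩ := h j (Nat.lt_succ_iff.mp (Finset.mem_range.mp hj))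
    obtain ⟨h₁, h₂⟩ := abs_le.mp hjz
    exact Finset.mem_biUnion.mpr ⟨z, hz, Finset.mem_Icc.mpr ⟨by linarith, by linarith⟩⟩
  calc T + 1 = ((Finset.range (T + 1)).image (fun j : ℕ => (j : ℤ))).card := by
        rw [Finset.card_image_of_injective _ Nat.cast_injective, Finset.card_range]
    _ ≤ _ := Finset.card_le_card hsub
    _ ≤ ∑ z ∈ Z, (Finset.Icc (z - W) (z + W)).card := Finset.card_biUnion_le
    _ = Z.card * (2 * W + 1) := by
      simp only [Int.card_Icc, show ∀ z : ℤ, z + W + 1 - (z - W) = ((2 * W + 1 : ℕ) : ℤ) by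
        intro z; push_cast; ring, Int.toNat_natCast, Finset.sum_const, smul_eq_mul]

end Discretization

section HomCantor

variable {a : ℝ}

lemma summable_digit_mul_pow (ha0 : 0 ≤ a) (ha1 : a < 1) {ε : ℕ → ℝ}
    (hε : ∀ j, ε j = 0 ∨ ε j = 1) : Summable fun j => ε j * a ^ j :=
  (summable_geometric_of_lt_one ha0 ha1).of_nonneg_of_le
    (fun j => by rcases hε j with h | h <;> simp [h, pow_nonneg ha0])
    (fun j => by rcases hε j with h | h <;> simp [h, pow_nonneg ha0])

lemma homCantor_subset_Icc (ha0 : 0 ≤ a) (ha1 : a < 1) : homCantor a ⊆ Icc 0 1 := by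
  rintro _ ⟨ε, hε, rfl⟩
  have hsum : ∑' j, ε j * a ^ j ≤ (1 - a)⁻¹ := by
    rw [← tsum_geometric_of_lt_one ha0 ha1]
    exact (summable_digit_mul_pow ha0 ha1 hε).tsum_le_tsum
      (fun j => by rcases hε j with h | h <;> simp [h, pow_nonneg ha0])
      (summable_geometric_of_lt_one ha0 ha1)
  refine ⟨mul_nonneg (by linarith) (tsum_nonneg fun j => ?_), ?_⟩
  · rcases hε j with h | h <;> simp [h, pow_nonneg ha0]
  · calc (1 - a) * ∑' j, ε j * a ^ j ≤ (1 - a) * (1 - a)⁻¹ := by gcongr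
      _ = 1 := mul_inv_cancel₀ (by linarith)

lemma zero_mem_homCantor (a : ℝ) : 0 ∈ homCantor a :=
  ⟨0, fun _ => Or.inl rfl, by simp⟩

lemma mul_add_mul_mem_homCantor (ha0 : 0 ≤ a) (ha1 : a < 1) {e x : ℝ} (he : e = 0 ∨ e = 1)
    (hx : x ∈ homCantor a) : (1 - a) * e + a * x ∈ homCantor a := by
  obtain ⟨ε, hε, rfl⟩ := hx
  have hε' : ∀ j, (Nat.casesOn j e ε : ℝ) = 0 ∨ (Nat.casesOn j e ε : ℝ) = 1 := by
    intro j; cases j; exacts [he, hε _]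
  refine ⟨fun j => Nat.casesOn j e ε, hε', ?_⟩
  rw [(summable_digit_mul_pow ha0 ha1 hε').tsum_eq_zero_add]
  simp only [pow_zero, mul_one, pow_succ, ← mul_assoc, tsum_mul_right]
  show _ = (1 - a) * (e + _)
  ring

lemma natCast_mul_add_mem_nsmul_homCantor (ha0 : 0 ≤ a) (ha1 : a < 1) {k d : ℕ} (hd : d ≤ k)
    {y : ℝ} (hy : y ∈ k • homCantor a) : d * (1 - a) + a * y ∈ k • homCantor a := by
  obtain ⟨f, hf, rfl⟩ := mem_nsmul_iff_sum.mp hy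
  refine mem_nsmul_iff_sum.mpr ⟨fun i => (1 - a) * (if (i : ℕ) < d then 1 else 0) + a * f i,
    fun i => mul_add_mul_mem_homCantor ha0 ha1 (by split_ifs <;> simp) (hf i), ?_⟩
  have hdigits : ∑ i : Fin k, (if (i : ℕ) < d then (1 : ℝ) else 0) = d := by
    rw [Fin.sum_univ_eq_sum_range (fun i => if i < d then (1 : ℝ) else 0), Finset.sum_boole,
      show {i ∈ Finset.range k | i < d} = Finset.range d by ext; simp; omega]
    simp
  rw [Finset.sum_add_distrib, ← Finset.mul_sum, ← Finset.mul_sum, hdigits]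
  ring

lemma exists_nat_mul_le_sub_le {b c x : ℝ} {k : ℕ} (hc : 0 < c) (hcb : c ≤ b) (hx : 0 ≤ x)
    (hxk : x ≤ k * c + b) : ∃ d : ℕ, d ≤ k ∧ d * c ≤ x ∧ x - d * c ≤ b := by
  have hfloor : (⌊x / c⌋₊ : ℝ) * c ≤ x := (le_div_iff₀ hc).mp (Nat.floor_le (by positivity))
  rcases le_or_gt k ⌊x / c⌋₊ with h | h
  · refine ⟨k, le_rfl, le_trans ?_ hfloor, by linarith⟩
    gcongr
  · refine ⟨⌊x / c⌋₊, h.le, hfloor, ?_⟩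
    linarith [(div_lt_iff₀ hc).mp (Nat.lt_floor_add_one (x / c))]

/-- Greedy expansion in base `a` with digits `0, …, k`: the condition `1 - a ≤ k a` guarantees
that after the leading digit the remainder, rescaled by `1 / a`, is back in `[0, k]`. -/
lemma exists_mem_nsmul_homCantor_near (ha0 : 0 < a) (ha1 : a < 1) {k : ℕ}
    (hka : 1 - a ≤ k * a) (n : ℕ) :
    ∀ x ∈ Icc (0 : ℝ) k, ∃ y ∈ k • homCantor a, |x - y| ≤ k * a ^ n := by
  induction n with
  | zero =>
    rintro x ⟨hx0, hxk⟩
    refine ⟨0, mem_nsmul_iff_sum.mpr ⟨0, fun _ => zero_mem_homCantor a, by simp⟩, ?_⟩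
    simpa [abs_of_nonneg hx0] using hxk
  | succ n ih =>
    rintro x ⟨hx0, hxk⟩
    obtain ⟨d, hdk, hdx, hxd⟩ :=
      exists_nat_mul_le_sub_le (by linarith) hka hx0 (by linarith : x ≤ k * (1 - a) + k * a)
    obtain ⟨y, hy, hxy⟩ := ih ((x - d * (1 - a)) / a)
      ⟨div_nonneg (by linarith) ha0.le, (div_le_iff₀ ha0).mpr hxd⟩
    refine ⟨d * (1 - a) + a * y, natCast_mul_add_mem_nsmul_homCantor ha0.le ha1 hdk hy, ?_⟩
    calc |x - (d * (1 - a) + a * y)| = a * |(x - d * (1 - a)) / a - y| := by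
          rw [← abs_of_pos ha0, ← abs_mul, abs_of_pos ha0]
          congr 1
          field_simp
          ring
      _ ≤ a * (k * a ^ n) := by gcongr
      _ = k * a ^ (n + 1) := by ring

lemma inv_le_card_nsmul_image_floor_homCantor (ha0 : 0 < a) (ha1 : a < 1) {k : ℕ}
    (hka : 1 - a ≤ k * a) {δ : ℝ} (hδ : 0 < δ) {T : Finset ℤ}
    (hT : (T : Set ℤ) = (fun x => ⌊x / δ⌋) '' homCantor a) :
    1 / δ ≤ (4 * k + 1) * (k • T).card := by
  have hk : (1 : ℝ) ≤ k := by
    rcases Nat.eq_zero_or_pos k with rfl | hk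
    · simp only [Nat.cast_zero, zero_mul] at hka
      linarith
    · exact_mod_cast hk
  obtain ⟨n, hn⟩ := exists_pow_lt_of_lt_one hδ ha1
  have hnear : ∀ j ≤ ⌊1 / δ⌋₊, ∃ z ∈ k • T, |(j : ℤ) - z| ≤ (2 * k : ℕ) := by
    intro j hj
    have hjδ : (j : ℝ) * δ ≤ 1 :=
      (le_div_iff₀ hδ).mp ((Nat.cast_le.mpr hj).trans (Nat.floor_le (by positivity)))
    obtain ⟨y, hy, hxy⟩ :=
      exists_mem_nsmul_homCantor_near ha0 ha1 hka n (j * δ) ⟨by positivity, by linarith⟩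
    obtain ⟨z, hz, hyz⟩ := exists_mem_nsmul_image_floor_near δ hy
    refine ⟨z, by rwa [← Finset.mem_coe, Finset.coe_nsmul, hT], ?_⟩
    have hjy : |(j : ℝ) - y / δ| ≤ k := by
      rw [show (j : ℝ) - y / δ = (j * δ - y) / δ by field_simp, abs_div, abs_of_pos hδ,
        div_le_iff₀ hδ]
      calc |j * δ - y| ≤ k * a ^ n := hxy
        _ ≤ k * δ := by gcongr
    have hjz : |(j : ℝ) - z| ≤ 2 * k := by
      calc |(j : ℝ) - z| ≤ |(j : ℝ) - y / δ| + |y / δ - z| := abs_sub_le _ _ _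
        _ ≤ k + k := add_le_add hjy hyz
        _ = 2 * k := by ring
    exact_mod_cast hjz
  have hcount := add_one_le_card_mul_of_forall_exists_near hnear
  calc 1 / δ ≤ ⌊1 / δ⌋₊ + 1 := (Nat.lt_floor_add_one _).le
    _ ≤ (k • T).card * (2 * (2 * k) + 1) := by exact_mod_cast hcount
    _ = (4 * k + 1) * (k • T).card := by ring

end HomCantor

lemma isBounded_homCantor {a : ℝ} (ha0 : 0 ≤ a) (ha1 : a < 1) : IsBounded (homCantor a) :=
  (Metric.isBounded_Icc 0 1).subset (homCantor_subset_Icc ha0 ha1)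

lemma coverNumber_pow_le {a : ℝ} (ha0 : 0 < a) (ha1 : a < 1) {k : ℕ} (hka : 1 - a ≤ k * a)
    {E : Set ℝ} (hE : IsBounded E) (hEne : E.Nonempty) {δ : ℝ} (hδ : 0 < δ) :
    (coverNumber E δ : ℝ) ^ (k - 1) ≤
      (4 * k + 1) * δ * (3 * coverNumber (homCantor a + E) δ : ℝ) ^ k := by
  have hC := isBounded_homCantor ha0.le ha1
  obtain ⟨S, hS⟩ := (finite_image_floor_div hE hδ).exists_finset_coe
  obtain ⟨T, hT⟩ := (finite_image_floor_div hC hδ).exists_finset_coe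
  have hSne : S.Nonempty := by
    rw [← Finset.coe_nonempty, hS]
    exact hEne.image _
  have hES : coverNumber E δ ≤ S.card := coverNumber_le_card_of_image_floor_subset hδ hS.ge
  have hST : (S + T).card ≤ 3 * coverNumber (homCantor a + E) δ := by
    rw [add_comm S T]
    exact card_add_le_three_mul_coverNumber (hC.add hE) hδ hT.le hS.le
  have hPR : ((k • T).card : ℝ) * S.card ^ (k - 1) ≤ (3 * coverNumber (homCantor a + E) δ) ^ k := by
    exact_mod_cast (Finset.card_nsmul_mul_card_pow_le hSne T k).trans (Nat.pow_le_pow_left hST k)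
  have hT' := inv_le_card_nsmul_image_floor_homCantor ha0 ha1 hka hδ hT
  calc (coverNumber E δ : ℝ) ^ (k - 1) = δ * (1 / δ) * coverNumber E δ ^ (k - 1) := by
        field_simp
    _ ≤ δ * ((4 * k + 1) * (k • T).card) * S.card ^ (k - 1) := by gcongr
    _ = (4 * k + 1) * δ * ((k • T).card * S.card ^ (k - 1)) := by ring
    _ ≤ (4 * k + 1) * δ * (3 * coverNumber (homCantor a + E) δ) ^ k := by gcongr

noncomputable def logCoverRatio (A : Set ℝ) (δ : ℝ) : ℝ :=
  Real.log (coverNumber A δ) / Real.log (1 / δ)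

lemma tendsto_log_one_div_nhdsGT_zero :
    Tendsto (fun δ : ℝ => Real.log (1 / δ)) (𝓝[>] 0) atTop := by
  have h := Real.tendsto_log_atTop.comp tendsto_inv_nhdsGT_zero
  simp only [Function.comp_def] at h
  simpa only [one_div] using h

section LogCoverRatio

variable {A : Set ℝ}

lemma eventually_logCoverRatio_nonneg (hA : IsBounded A) (hne : A.Nonempty) :
    ∀ᶠ δ in 𝓝[>] 0, 0 ≤ logCoverRatio A δ := by
  filter_upwards [self_mem_nhdsWithin, tendsto_log_one_div_nhdsGT_zero.eventually_ge_atTop 0]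
    with δ hδ hlog
  exact div_nonneg (Real.log_nonneg (by exact_mod_cast one_le_coverNumber hA hne hδ)) hlog

lemma eventually_logCoverRatio_le_two (hA : IsBounded A) (hne : A.Nonempty) :
    ∀ᶠ δ in 𝓝[>] 0, logCoverRatio A δ ≤ 2 := by
  set l := sInf A
  set u := sSup A
  have hlu : l ≤ u := csInf_le_csSup hne hA.bddBelow hA.bddAbove
  filter_upwards [Ioo_mem_nhdsGT one_pos, tendsto_log_one_div_nhdsGT_zero.eventually_ge_atTop
    (max 1 (Real.log (u - l + 1)))] with δ ⟨hδ, hδ1⟩ hlog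
  have hN : (coverNumber A δ : ℝ) ≤ (u - l + 1) * (1 / δ) := by
    have hfloor : (⌊(u - l) / δ⌋₊ : ℝ) ≤ (u - l) / δ := Nat.floor_le (by positivity)
    have hδ' : 1 ≤ 1 / δ := by rw [le_div_iff₀ hδ]; linarith
    calc (coverNumber A δ : ℝ) ≤ ⌊(u - l) / δ⌋₊ + 1 := by
          exact_mod_cast coverNumber_le_floor_add_one hA.subset_Icc_sInf_sSup hδ
      _ ≤ (u - l) / δ + 1 / δ := by gcongr
      _ = (u - l + 1) * (1 / δ) := by ring
  have hN1 : (1 : ℝ) ≤ coverNumber A δ := by exact_mod_cast one_le_coverNumber hA hne hδ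
  rw [logCoverRatio, div_le_iff₀ (by linarith [le_max_left 1 (Real.log (u - l + 1))])]
  calc Real.log (coverNumber A δ) ≤ Real.log ((u - l + 1) * (1 / δ)) :=
        Real.log_le_log (by linarith) hN
    _ = Real.log (u - l + 1) + Real.log (1 / δ) := Real.log_mul (by linarith) (by positivity)
    _ ≤ 2 * Real.log (1 / δ) := by linarith [le_max_right 1 (Real.log (u - l + 1))]

end LogCoverRatio

lemma add_mul_liminf_le_liminf {ι : Type*} {l : Filter ι} {f g e : ι → ℝ} {α β : ℝ}
    (hβ : 0 ≤ β) (hf : IsBoundedUnder (· ≥ ·) l f) (hg : IsCoboundedUnder (· ≥ ·) l g)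
    (he : Tendsto e l (𝓝 0)) (hfg : ∀ᶠ i in l, α + β * f i ≤ g i + e i) :
    α + β * liminf f l ≤ liminf g l := by
  refine le_of_forall_lt_imp_le_of_dense fun c hc => ?_
  set η := (α + β * liminf f l - c) / 2 with hη_def
  have hη : 0 < η := by linarith
  have hs : liminf f l - η / (β + 1) < liminf f l := sub_lt_self _ (by positivity)
  have hβη : β * (η / (β + 1)) ≤ η := by
    rw [mul_div_assoc', div_le_iff₀ (by linarith)]
    nlinarith
  refine le_liminf_of_le hg ?_
  filter_upwards [hfg, eventually_lt_of_lt_liminf hs hf, he.eventually (gt_mem_nhds hη)]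
    with i hi hfi hei
  have hβf := mul_le_mul_of_nonneg_left hfi.le hβ
  rw [mul_sub] at hβf
  linarith

lemma inv_add_mul_logCoverRatio_le {a : ℝ} (ha0 : 0 < a) (ha1 : a < 1) {k : ℕ} (hk : 1 ≤ k)
    (hka : 1 - a ≤ k * a) {E : Set ℝ} (hE : IsBounded E) (hEne : E.Nonempty) {δ : ℝ}
    (hδ : 0 < δ) (hδ1 : δ < 1) :
    1 / k + (k - 1) / k * logCoverRatio E δ ≤
      logCoverRatio (homCantor a + E) δ +
        Real.log ((4 * k + 1) * 3 ^ k) / (k * Real.log (1 / δ)) := by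
  have hCE : IsBounded (homCantor a + E) := (isBounded_homCantor ha0.le ha1).add hE
  have hCEne : (homCantor a + E).Nonempty := Set.Nonempty.add ⟨0, zero_mem_homCantor a⟩ hEne
  have hL : 0 < Real.log (1 / δ) := Real.log_pos (by rw [lt_div_iff₀ hδ]; linarith)
  have hk0 : (0 : ℝ) < k := by exact_mod_cast hk
  have hNE : (1 : ℝ) ≤ coverNumber E δ := Nat.one_le_cast.mpr (one_le_coverNumber hE hEne hδ)
  have hN : (1 : ℝ) ≤ coverNumber (homCantor a + E) δ :=
    Nat.one_le_cast.mpr (one_le_coverNumber hCE hCEne hδ)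
  have hlogδ : Real.log δ = -Real.log (1 / δ) := by rw [one_div, Real.log_inv, neg_neg]
  have key : (k - 1) * Real.log (coverNumber E δ) + Real.log (1 / δ) ≤
      k * Real.log (coverNumber (homCantor a + E) δ) + Real.log ((4 * k + 1) * 3 ^ k) := by
    have h := Real.log_le_log (by positivity) (coverNumber_pow_le ha0 ha1 hka hE hEne hδ)
    rw [Real.log_pow, Nat.cast_sub hk, Real.log_mul (by positivity) (by positivity),
      Real.log_mul (by positivity) (by positivity), Real.log_pow, Real.log_mul (by norm_num)
      (by positivity), hlogδ] at h
    rw [Real.log_mul (by positivity) (by positivity), Real.log_pow]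
    push_cast at h
    linarith
  calc 1 / k + (k - 1) / k * logCoverRatio E δ
      = ((k - 1) * Real.log (coverNumber E δ) + Real.log (1 / δ)) / (k * Real.log (1 / δ)) := by
        unfold logCoverRatio; field_simp; ring
    _ ≤ (k * Real.log (coverNumber (homCantor a + E) δ) + Real.log ((4 * k + 1) * 3 ^ k)) /
        (k * Real.log (1 / δ)) := by gcongr
    _ = _ := by unfold logCoverRatio; field_simp

theorem stmt7 (a : ℝ) (ha0 : 0 < a) (ha1 : a < 1 / 2) (k : ℕ) (hk : 1 ≤ k)
    (hka : (1 - a) / a ≤ (k : ℝ))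
    (E : Set ℝ) (hEne : E.Nonempty) (hEc : IsCompact E) :
    1 / (k : ℝ) + (((k : ℝ) - 1) / k) * lowerMinkDim E ≤ lowerMinkDim (homCantor a + E) := by
  have ha1' : a < 1 := by linarith
  have hka' : 1 - a ≤ k * a := by rwa [div_le_iff₀ ha0] at hka
  have hE : IsBounded E := hEc.isBounded
  have hCE : IsBounded (homCantor a + E) := (isBounded_homCantor ha0.le ha1').add hE
  have hCEne : (homCantor a + E).Nonempty := Set.Nonempty.add ⟨0, zero_mem_homCantor a⟩ hEne
  have hkR : (1 : ℝ) ≤ k := by exact_mod_cast hk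
  refine add_mul_liminf_le_liminf (f := logCoverRatio E) (g := logCoverRatio (homCantor a + E))
    (e := fun δ => Real.log ((4 * k + 1) * 3 ^ k) / (k * Real.log (1 / δ)))
    (div_nonneg (by linarith) (by linarith))
    (isBoundedUnder_of_eventually_ge (eventually_logCoverRatio_nonneg hE hEne))
    (isBoundedUnder_of_eventually_le
      (eventually_logCoverRatio_le_two hCE hCEne)).isCoboundedUnder_ge
    (tendsto_const_nhds.div_atTop
      (tendsto_log_one_div_nhdsGT_zero.const_mul_atTop (by linarith : (0 : ℝ) < k))) ?_
  filter_upwards [Ioo_mem_nhdsGT one_pos] with δ ⟨hδ, hδ1⟩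
  exact inv_add_mul_logCoverRatio_le ha0 ha1' hk hka' hE hEne hδ hδ1
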